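/- arXiv:math/0407371 — 5 statements merged into one kernel-verified Lean document; each statement's English description precedes it below -/
import Mathlib

section
/- Let C be a category, F : C → C a functor, and α : id_C → F a natural transformation such that for every object X of C both morphisms α_{F(X)} : F(X) → F(F(X)) and F(α_X) : F(X) → F(F(X)) are isomorphisms. Then for any two objects X, Y of C, the map Hom_C(F(X), F(Y)) → Hom_C(X, F(Y)) given by precomposition with α_X (i.e. g ↦ g ∘ α_X) is a bijection. -/
open CategoryTheory

theorem stmt_0 {C : Type*} [Category C] (F : C ⥤ C) (α : 𝟭 C ⟶ F)
    (h1 : ∀ X : C, IsIso (α.app (F.obj X)))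
    (h2 : ∀ X : C, IsIso (F.map (α.app X)))
    (X Y : C) :
    Function.Bijective (fun g : F.obj X ⟶ F.obj Y => α.app X ≫ g) := by
  have key : ∀ Z : C, α.app (F.obj Z) = F.map (α.app Z) := by
    intro Z
    have hA : α.app (F.obj (F.obj Z)) = F.map (α.app (F.obj Z)) := by
      have hn := α.naturality (α.app (F.obj Z))
      simp only [Functor.id_map] at hn
      haveI := h1 Z
      exact (cancel_epi (α.app (F.obj Z))).mp hn
    have hB : F.map (α.app (F.obj Z)) = F.map (F.map (α.app Z)) := by
      have h := α.naturality (α.app Z)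
      simp only [Functor.id_map] at h
      have h' := congrArg F.map h
      simp only [Functor.map_comp] at h'
      haveI := h2 Z
      exact (cancel_epi (F.map (α.app Z))).mp h'
    have hnat := α.naturality (F.map (α.app Z))
    simp only [Functor.id_map] at hnat
    rw [hA, hB] at hnat
    haveI : IsIso (F.map (F.map (α.app Z))) := by rw [← hB]; exact h2 (F.obj Z)
    exact ((cancel_mono (F.map (F.map (α.app Z)))).mp hnat).symm
  haveI : ∀ Z : C, IsIso (α.app (F.obj Z)) := h1
  constructor
  · intro g g' h
    simp only at h
    have hg := α.naturality g
    have hg' := α.naturality g'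
    simp only [Functor.id_map] at hg hg'
    have : F.map g = F.map g' := by
      have := congrArg F.map h
      simp only [Functor.map_comp] at this
      rw [← key X] at this
      exact (cancel_epi (α.app (F.obj X))).mp this
    rw [this, ← hg'] at hg
    exact (cancel_mono (α.app (F.obj Y))).mp hg
  · intro f
    refine ⟨F.map f ≫ inv (α.app (F.obj Y)), ?_⟩
    have := α.naturality f
    simp only [Functor.id_map] at this
    simp [← this]
end

section
/- Let C be a category, F : C → C a functor, and α : id_C → F a natural transformation such that for every object X of C both morphisms α_{F(X)} : F(X) → F(F(X)) and F(α_X) : F(X) → F(F(X)) are isomorphisms. Then α_{F(X)} = F(α_X) for every object X of C. -/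
open CategoryTheory

theorem stmt_1 {C : Type*} [Category C] (F : C ⥤ C) (α : 𝟭 C ⟶ F)
    (h1 : ∀ X : C, IsIso (α.app (F.obj X)))
    (h2 : ∀ X : C, IsIso (F.map (α.app X)))
    (X : C) :
    α.app (F.obj X) = F.map (α.app X) := by
  have hb : IsIso (F.map (α.app X)) := h2 X
  have ha : IsIso (α.app (F.obj X)) := h1 X
  -- naturality at α.app X : α.app X ≫ α.app (F X) = α.app X ≫ F.map (α.app X)
  have n1 := α.naturality (α.app X)
  simp only [Functor.id_map, Functor.id_obj] at n1
  -- apply F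
  have n1' : F.map (α.app X) ≫ F.map (α.app (F.obj X))
      = F.map (α.app X) ≫ F.map (F.map (α.app X)) := by
    rw [← F.map_comp, ← F.map_comp, n1]
  have key : F.map (α.app (F.obj X)) = F.map (F.map (α.app X)) :=
    (cancel_epi (F.map (α.app X))).mp n1'
  have hFa : IsIso (F.map (α.app (F.obj X))) := by
    rw [key]; infer_instance
  -- naturality at F.map (α.app X)
  have n2 := α.naturality (F.map (α.app X))
  simp only [Functor.id_map, Functor.id_obj] at n2
  -- naturality at α.app (F X)
  have n3 := α.naturality (α.app (F.obj X))
  simp only [Functor.id_map, Functor.id_obj] at n3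
  -- n3 : α.app (F X) ≫ α.app (F (F X)) = α.app (F X) ≫ F.map (α.app (F X))
  have hα2 : α.app (F.obj (F.obj X)) = F.map (α.app (F.obj X)) :=
    (cancel_epi (α.app (F.obj X))).mp n3
  -- n2 : F.map (α.app X) ≫ α.app (F (F X)) = α.app (F X) ≫ F.map (F.map (α.app X))
  rw [hα2, ← key] at n2
  -- n2 : F.map (α.app X) ≫ F.map (α.app (F X)) = α.app (F X) ≫ F.map (α.app (F X))
  exact ((cancel_mono (F.map (α.app (F.obj X)))).mp n2).symm
end

section
/- Let ξ₀ ∈ ℝⁿ be nonzero and let U ⊆ ℝⁿ × ℝᵐ be an open set such that every vector (v, z₀) in the normal cone C_Z(U) of U along Z = {0} × ℝᵐ which satisfies ⟨ξ₀, v⟩ ≥ 0 has v = 0. Then there exist ε > 0 and δ > 0 such that U ∩ {(x,z) : |(x,z)| ≤ δ} ⊆ {(x,z) ∈ ℝⁿ × ℝᵐ : −⟨ξ₀, x⟩ > ε·|x|}. -/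
open Filter Topology

/-- The normal cone of a subset `A ⊆ ℝⁿ × ℝᵐ` along `Z = {0} × ℝᵐ`:
`(v, z₀)` belongs to the cone iff there are positive reals `t k → 0` and points
`(x k, z k) ∈ A` with `z k → z₀` and `x k / t k → v`. -/
def normalCone (n m : ℕ)
    (A : Set (EuclideanSpace ℝ (Fin n) × EuclideanSpace ℝ (Fin m))) :
    Set (EuclideanSpace ℝ (Fin n) × EuclideanSpace ℝ (Fin m)) :=
  {p | ∃ (t : ℕ → ℝ) (x : ℕ → EuclideanSpace ℝ (Fin n))
        (z : ℕ → EuclideanSpace ℝ (Fin m)),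
      (∀ k, 0 < t k) ∧ Tendsto t atTop (𝓝 0) ∧ (∀ k, (x k, z k) ∈ A) ∧
      Tendsto z atTop (𝓝 p.2) ∧ Tendsto (fun k => (t k)⁻¹ • x k) atTop (𝓝 p.1)}

/-! If the conclusion failed, there would be points `p k ∈ U` tending to the origin with
`-⟪ξ₀, x_k⟫ ≤ |x_k| / (k + 1)`. None of them lies on `Z`: a point `(0, z)` of the open set `U`
puts every `(v, z)` in the normal cone, in particular `(ξ₀, z)`, which is excluded. So `x_k ≠ 0`,
and a limit `v` of the unit vectors `x_k / |x_k|` along a subsequence gives a unit vector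
`(v, 0)` of the normal cone with `⟪ξ₀, v⟫ ≥ 0`, again excluded. -/

theorem Prod.norm_le_sqrt_norm_sq_add_norm_sq {E F : Type*} [SeminormedAddCommGroup E]
    [SeminormedAddCommGroup F] (p : E × F) : ‖p‖ ≤ √(‖p.1‖ ^ 2 + ‖p.2‖ ^ 2) := by
  rw [Prod.norm_def]
  exact max_le (Real.le_sqrt_of_sq_le (by nlinarith [sq_nonneg ‖p.2‖]))
    (Real.le_sqrt_of_sq_le (by nlinarith [sq_nonneg ‖p.1‖]))

theorem real_inner_nonneg_of_tendsto_normalize {E : Type*} [NormedAddCommGroup E]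
    [InnerProductSpace ℝ E] {ξ v : E} {x : ℕ → E} {ε : ℕ → ℝ} (hε : Tendsto ε atTop (𝓝 0))
    (hx : ∀ k, -(inner ℝ ξ (x k)) ≤ ε k * ‖x k‖) (hx₀ : ∀ k, x k ≠ 0)
    (hv : Tendsto (fun k => ‖x k‖⁻¹ • x k) atTop (𝓝 v)) : 0 ≤ inner ℝ ξ v := by
  have hbound : ∀ k, -ε k ≤ inner ℝ ξ (‖x k‖⁻¹ • x k) := fun k => by
    rw [real_inner_smul_right, inv_mul_eq_div, neg_le, ← neg_div,
      div_le_iff₀ (norm_pos_iff.2 (hx₀ k))]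
    exact hx k
  exact le_of_tendsto_of_tendsto' (by simpa using hε.neg) (tendsto_const_nhds.inner hv) hbound

section NormalCone

variable {n m : ℕ} {A : Set (EuclideanSpace ℝ (Fin n) × EuclideanSpace ℝ (Fin m))}
  {v : EuclideanSpace ℝ (Fin n)} {z₀ : EuclideanSpace ℝ (Fin m)}

theorem mem_normalCone_of_eventually {t : ℕ → ℝ} {x : ℕ → EuclideanSpace ℝ (Fin n)}
    {z : ℕ → EuclideanSpace ℝ (Fin m)} (ht : ∀ᶠ k in atTop, 0 < t k)
    (ht₀ : Tendsto t atTop (𝓝 0)) (hA : ∀ᶠ k in atTop, (x k, z k) ∈ A)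
    (hz : Tendsto z atTop (𝓝 z₀)) (hx : Tendsto (fun k => (t k)⁻¹ • x k) atTop (𝓝 v)) :
    (v, z₀) ∈ normalCone n m A := by
  obtain ⟨N, hN⟩ := eventually_atTop.1 (ht.and hA)
  exact ⟨fun k => t (k + N), fun k => x (k + N), fun k => z (k + N),
    fun k => (hN _ (Nat.le_add_left N k)).1, (tendsto_add_atTop_iff_nat N).2 ht₀,
    fun k => (hN _ (Nat.le_add_left N k)).2, (tendsto_add_atTop_iff_nat N).2 hz,
    (tendsto_add_atTop_iff_nat (f := fun k => (t k)⁻¹ • x k) N).2 hx⟩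

theorem mem_normalCone_of_isOpen (hA : IsOpen A) (hz₀ : (0, z₀) ∈ A) (v) :
    (v, z₀) ∈ normalCone n m A := by
  have ht₀ : Tendsto (fun k : ℕ => 1 / ((k : ℝ) + 1)) atTop (𝓝 0) :=
    tendsto_one_div_add_atTop_nhds_zero_nat
  have hx₀ : Tendsto (fun k : ℕ => (1 / ((k : ℝ) + 1)) • v) atTop (𝓝 0) := by
    simpa using ht₀.smul_const v
  refine mem_normalCone_of_eventually (.of_forall fun k => by positivity) ht₀
    ((hx₀.prodMk_nhds tendsto_const_nhds).eventually (hA.mem_nhds hz₀)) tendsto_const_nhds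
    (tendsto_const_nhds.congr fun k => ?_)
  rw [smul_smul, inv_mul_cancel₀ (by positivity), one_smul]

theorem mem_normalCone_of_tendsto_normalize
    {p : ℕ → EuclideanSpace ℝ (Fin n) × EuclideanSpace ℝ (Fin m)} (hA : ∀ k, p k ∈ A)
    (hp₁ : ∀ k, (p k).1 ≠ 0) (hp : Tendsto p atTop (𝓝 (0, z₀)))
    (hv : Tendsto (fun k => ‖(p k).1‖⁻¹ • (p k).1) atTop (𝓝 v)) :
    (v, z₀) ∈ normalCone n m A :=
  ⟨fun k => ‖(p k).1‖, fun k => (p k).1, fun k => (p k).2, fun k => norm_pos_iff.2 (hp₁ k),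
    by simpa using hp.fst_nhds.norm, hA, hp.snd_nhds, hv⟩

end NormalCone

theorem stmt_3 {n m : ℕ} (ξ₀ : EuclideanSpace ℝ (Fin n)) (hξ : ξ₀ ≠ 0)
    (U : Set (EuclideanSpace ℝ (Fin n) × EuclideanSpace ℝ (Fin m)))
    (hUopen : IsOpen U)
    (hcone : ∀ v z₀, (v, z₀) ∈ normalCone n m U → 0 ≤ (inner ℝ ξ₀ v : ℝ) → v = 0) :
    ∃ ε > (0 : ℝ), ∃ δ > (0 : ℝ), ∀ p ∈ U,
      Real.sqrt (‖p.1‖ ^ 2 + ‖p.2‖ ^ 2) ≤ δ →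
      ε * ‖p.1‖ < -(inner ℝ ξ₀ p.1 : ℝ) := by
  by_contra! H
  choose p hpU hpδ hpε using fun k : ℕ =>
    H (1 / ((k : ℝ) + 1)) (by positivity) (1 / ((k : ℝ) + 1)) (by positivity)
  have hp₁ : ∀ k, (p k).1 ≠ 0 := fun k h₀ =>
    have hZ : (0, (p k).2) ∈ U := h₀ ▸ hpU k
    hξ (hcone ξ₀ _ (mem_normalCone_of_isOpen hUopen hZ ξ₀) real_inner_self_nonneg)
  have hp : Tendsto p atTop (𝓝 0) :=
    squeeze_zero_norm (fun k => (Prod.norm_le_sqrt_norm_sq_add_norm_sq _).trans (hpδ k))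
      tendsto_one_div_add_atTop_nhds_zero_nat
  obtain ⟨v, hv, φ, hφ, hvφ⟩ := (isCompact_sphere (0 : EuclideanSpace ℝ (Fin n)) 1).tendsto_subseq
    (x := fun k => ‖(p k).1‖⁻¹ • (p k).1) fun k => mem_sphere_zero_iff_norm.2 (norm_smul_inv_norm (hp₁ k))
  have hv_cone : (v, 0) ∈ normalCone n m U :=
    mem_normalCone_of_tendsto_normalize (fun k => hpU (φ k)) (fun k => hp₁ (φ k))
      (hp.comp hφ.tendsto_atTop) hvφ
  have hv_inner : 0 ≤ inner ℝ ξ₀ v :=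
    real_inner_nonneg_of_tendsto_normalize
      (tendsto_one_div_add_atTop_nhds_zero_nat.comp hφ.tendsto_atTop) (fun k => hpε (φ k))
      (fun k => hp₁ (φ k)) hvφ
  simp [hcone v 0 hv_cone hv_inner] at hv
end

section
/- Let V be a finite-dimensional real vector space, E ⊆ V a nonzero linear subspace, and σ₁, σ₂ ∈ V* linear functionals such that the convex cone ℝ≥0·σ₁ + ℝ≥0·σ₂ meets the annihilator E^⊥ only in 0. Then there exists a one-dimensional subspace ℓ ⊆ E such that (ℝ≥0·σ₁ + ℝ≥0·σ₂) ∩ ℓ^⊥ = {0}; equivalently, there exists a nonzero vector v ∈ E such that the only element φ of the cone ℝ≥0·σ₁ + ℝ≥0·σ₂ with φ(v) = 0 is φ = 0. -/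
set_option maxHeartbeats 2000000 in
theorem stmt_4 {V : Type*} [AddCommGroup V] [Module ℝ V] [FiniteDimensional ℝ V]
    (E : Submodule ℝ V) (hE : E ≠ ⊥) (σ₁ σ₂ : Module.Dual ℝ V)
    (h : ∀ a b : ℝ, 0 ≤ a → 0 ≤ b →
      (∀ v ∈ E, (a • σ₁ + b • σ₂) v = 0) → a • σ₁ + b • σ₂ = 0) :
    ∃ v ∈ E, v ≠ 0 ∧ ∀ a b : ℝ, 0 ≤ a → 0 ≤ b →
      (a • σ₁ + b • σ₂) v = 0 → a • σ₁ + b • σ₂ = 0 := by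
  by_cases hA : ∃ v ∈ E, 0 < σ₁ v ∧ 0 < σ₂ v
  · obtain ⟨v, hvE, h1, h2⟩ := hA
    refine ⟨v, hvE, ?_, ?_⟩
    · intro hv0; rw [hv0] at h1; simp at h1
    · intro a b ha hb hab
      simp only [LinearMap.add_apply, LinearMap.smul_apply, smul_eq_mul] at hab
      have ha0 : a = 0 := by nlinarith
      have hb0 : b = 0 := by nlinarith
      simp [ha0, hb0]
  · push_neg at hA
    -- hA : ∀ v ∈ E, 0 < σ₁ v → σ₂ v ≤ 0
    have hdet : ∀ u ∈ E, ∀ w ∈ E, σ₁ u * σ₂ w - σ₂ u * σ₁ w = 0 := by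
      intro u hu w hw
      by_contra hD
      set D := σ₁ u * σ₂ w - σ₂ u * σ₁ w with hDdef
      set z := ((σ₂ w - σ₁ w) / D) • u + ((σ₁ u - σ₂ u) / D) • w with hzdef
      have hz : z ∈ E := E.add_mem (E.smul_mem _ hu) (E.smul_mem _ hw)
      have h1 : σ₁ z = 1 := by
        simp only [hzdef, map_add, map_smul, smul_eq_mul]
        field_simp
        ring
      have h2 : σ₂ z = 1 := by
        simp only [hzdef, map_add, map_smul, smul_eq_mul]
        field_simp
        ring
      have := hA z hz (by rw [h1]; norm_num)
      rw [h2] at this; norm_num at this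
    by_cases h1z : ∀ v ∈ E, σ₁ v = 0
    · have hσ1 : σ₁ = 0 := by
        have := h 1 0 zero_le_one le_rfl (fun v hv => by
          simp [h1z v hv])
        simpa using this
      by_cases h2z : ∀ v ∈ E, σ₂ v = 0
      · have hσ2 : σ₂ = 0 := by
          have := h 0 1 le_rfl zero_le_one (fun v hv => by
            simp [h2z v hv])
          simpa using this
        obtain ⟨v, hvE, hv0⟩ := Submodule.exists_mem_ne_zero_of_ne_bot hE
        exact ⟨v, hvE, hv0, fun a b _ _ _ => by simp [hσ1, hσ2]⟩
      · push_neg at h2z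
        obtain ⟨w, hwE, hw⟩ := h2z
        rcases hw.lt_or_gt with hneg | hpos
        · refine ⟨-w, E.neg_mem hwE, ?_, ?_⟩
          · intro h0; rw [neg_eq_zero] at h0; rw [h0] at hneg; simp at hneg
          · intro a b ha hb hab
            simp only [LinearMap.add_apply, LinearMap.smul_apply, smul_eq_mul,
              map_neg, hσ1, LinearMap.zero_apply] at hab
            have hb0 : b = 0 := by nlinarith
            simp [hσ1, hb0]
        · refine ⟨w, hwE, ?_, ?_⟩
          · intro h0; rw [h0] at hpos; simp at hpos
          · intro a b ha hb hab
            simp only [LinearMap.add_apply, LinearMap.smul_apply, smul_eq_mul,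
              hσ1, LinearMap.zero_apply] at hab
            have hb0 : b = 0 := by nlinarith
            simp [hσ1, hb0]
    · push_neg at h1z
      obtain ⟨u₀, hu₀E, hu₀⟩ := h1z
      by_cases h2z : ∀ v ∈ E, σ₂ v = 0
      · have hσ2 : σ₂ = 0 := by
          have := h 0 1 le_rfl zero_le_one (fun v hv => by
            simp [h2z v hv])
          simpa using this
        rcases hu₀.lt_or_gt with hneg | hpos
        · refine ⟨-u₀, E.neg_mem hu₀E, ?_, ?_⟩
          · intro h0; rw [neg_eq_zero] at h0; rw [h0] at hneg; simp at hneg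
          · intro a b ha hb hab
            simp only [LinearMap.add_apply, LinearMap.smul_apply, smul_eq_mul,
              map_neg, hσ2, LinearMap.zero_apply] at hab
            have ha0 : a = 0 := by nlinarith
            simp [hσ2, ha0]
        · refine ⟨u₀, hu₀E, ?_, ?_⟩
          · intro h0; rw [h0] at hpos; simp at hpos
          · intro a b ha hb hab
            simp only [LinearMap.add_apply, LinearMap.smul_apply, smul_eq_mul,
              hσ2, LinearMap.zero_apply] at hab
            have ha0 : a = 0 := by nlinarith
            simp [hσ2, ha0]
      · push_neg at h2z
        obtain ⟨w, hwE, hw⟩ := h2z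
        -- get u ∈ E with σ₁ u > 0
        obtain ⟨u, huE, hupos⟩ : ∃ u ∈ E, 0 < σ₁ u := by
          rcases hu₀.lt_or_gt with hneg | hpos
          · exact ⟨-u₀, E.neg_mem hu₀E, by simpa using hneg⟩
          · exact ⟨u₀, hu₀E, hpos⟩
        set s := σ₁ u with hs
        set t := σ₂ u with ht
        have hts : t ≤ 0 := hA u huE hupos
        have htne : t ≠ 0 := by
          intro h0
          have := hdet u huE w hwE
          rw [← hs, ← ht, h0] at this
          simp only [zero_mul, sub_zero] at this
          rcases mul_eq_zero.mp this with h' | h'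
          · exact absurd h' (ne_of_gt hupos)
          · exact hw h'
        have htneg : t < 0 := lt_of_le_of_ne hts htne
        have hzero : (-t) • σ₁ + s • σ₂ = 0 := by
          refine h (-t) s (by linarith) (le_of_lt hupos) ?_
          intro x hx
          have := hdet u huE x hx
          simp only [LinearMap.add_apply, LinearMap.smul_apply, smul_eq_mul]
          rw [← hs, ← ht] at this
          linarith
        refine ⟨u, huE, ?_, ?_⟩
        · intro h0; rw [hs, h0, map_zero] at hupos; exact lt_irrefl 0 hupos
        · intro a b ha hb hab
          simp only [LinearMap.add_apply, LinearMap.smul_apply, smul_eq_mul,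
            ← hs, ← ht] at hab
          have hsa : s * a = -(b * t) := by linarith [mul_comm a s, mul_comm b t]
          have key : s • (a • σ₁ + b • σ₂) = b • ((-t) • σ₁ + s • σ₂) := by
            match_scalars
            · linear_combination hsa
            · ring
          rw [hzero, smul_zero] at key
          rcases smul_eq_zero.mp key with h' | h'
          · exact absurd h' (ne_of_gt hupos)
          · exact h'
end

section
/- Let ξ₀ ∈ ℝⁿ and let δ, ε > 0. Let F̄ denote the closure in (ℝⁿ × ℝⁿ) × (ℝⁿ × ℝⁿ) of the set F = {((x,ξ),(x',ξ')) : δ ≥ ⟨ξ₀, x' − x⟩ > ε·(|x' − x| + |ξ' − ξ|)}. Then the restriction to F̄ of the map ((x,ξ),(x',ξ')) ↦ (⟨ξ₀, x⟩, (x', ξ')) ∈ ℝ × (ℝⁿ × ℝⁿ) is a proper map, i.e. the preimage in F̄ of every compact subset of ℝ × (ℝⁿ × ℝⁿ) is compact. -/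
/-!
Points of `F` satisfy `ε (|x' - x| + |ξ' - ξ|) < ⟨ξ₀, x' - x⟩ ≤ δ`, so on `F̄` the two points
`(x, ξ)` and `(x', ξ')` lie within `δ / ε` of each other. Hence the preimage of `K` is a closed
subset of `cthickening (δ / ε) L ×ˢ L`, where `L` is the (compact) projection of `K` to
`ℝⁿ × ℝⁿ`, and this product is compact since `ℝⁿ × ℝⁿ` is proper.
-/

open Metric

theorem isCompact_inter_preimage_snd_of_dist_le {X : Type*} [PseudoMetricSpace X] [ProperSpace X]
    [T2Space X] {A : Set (X × X)} {L : Set X} {r : ℝ} (hA : IsClosed A)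
    (hAr : ∀ p ∈ A, dist p.1 p.2 ≤ r) (hL : IsCompact L) :
    IsCompact (A ∩ Prod.snd ⁻¹' L) :=
  (hL.cthickening.prod hL).of_isClosed_subset (hA.inter (hL.isClosed.preimage continuous_snd))
    fun p ⟨hpA, hpL⟩ => ⟨mem_cthickening_of_dist_le p.1 p.2 r L hpL (hAr p hpA), hpL⟩

theorem dist_le_div_of_mul_norm_sub_add_norm_sub_le {E : Type*} [SeminormedAddCommGroup E]
    {ε δ : ℝ} (hε : 0 < ε) {p q : E × E} (h : ε * (‖q.1 - p.1‖ + ‖q.2 - p.2‖) ≤ δ) :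
    dist p q ≤ δ / ε := by
  rw [le_div_iff₀' hε, Prod.dist_eq, dist_comm p.1, dist_comm p.2, dist_eq_norm, dist_eq_norm]
  exact le_trans (mul_le_mul_of_nonneg_left (max_le_add_of_nonneg (norm_nonneg _)
    (norm_nonneg _)) hε.le) h

theorem stmt_5_general {n : ℕ} (ξ₀ : EuclideanSpace ℝ (Fin n)) (δ ε : ℝ)
    (hε : 0 < ε)
    (F : Set ((EuclideanSpace ℝ (Fin n) × EuclideanSpace ℝ (Fin n)) ×
              (EuclideanSpace ℝ (Fin n) × EuclideanSpace ℝ (Fin n))))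
    (hF : F = {p | (inner ℝ ξ₀ (p.2.1 - p.1.1) : ℝ) ≤ δ ∧
        ε * (‖p.2.1 - p.1.1‖ + ‖p.2.2 - p.1.2‖) < (inner ℝ ξ₀ (p.2.1 - p.1.1) : ℝ)})
    (K : Set (ℝ × (EuclideanSpace ℝ (Fin n) × EuclideanSpace ℝ (Fin n))))
    (hK : IsCompact K) :
    IsCompact {p ∈ closure F | ((inner ℝ ξ₀ p.1.1 : ℝ), p.2) ∈ K} := by
  have hF_dist : closure F ⊆ {p | dist p.1 p.2 ≤ δ / ε} := by
    refine closure_minimal ?_ (isClosed_le continuous_dist continuous_const)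
    rintro p hp
    rw [hF] at hp
    exact dist_le_div_of_mul_norm_sub_add_norm_sub_le hε (hp.2.trans_le hp.1).le
  refine (isCompact_inter_preimage_snd_of_dist_le isClosed_closure hF_dist
    (hK.image continuous_snd)).of_isClosed_subset ?_ fun p hp => ⟨hp.1, _, hp.2, rfl⟩
  exact isClosed_closure.inter (hK.isClosed.preimage (by fun_prop))

theorem stmt_5 {n : ℕ} (ξ₀ : EuclideanSpace ℝ (Fin n)) (δ ε : ℝ)
    (hδ : 0 < δ) (hε : 0 < ε)
    (F : Set ((EuclideanSpace ℝ (Fin n) × EuclideanSpace ℝ (Fin n)) ×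
              (EuclideanSpace ℝ (Fin n) × EuclideanSpace ℝ (Fin n))))
    (hF : F = {p | (inner ℝ ξ₀ (p.2.1 - p.1.1) : ℝ) ≤ δ ∧
        ε * (‖p.2.1 - p.1.1‖ + ‖p.2.2 - p.1.2‖) < (inner ℝ ξ₀ (p.2.1 - p.1.1) : ℝ)})
    (K : Set (ℝ × (EuclideanSpace ℝ (Fin n) × EuclideanSpace ℝ (Fin n))))
    (hK : IsCompact K) :
    IsCompact {p ∈ closure F | ((inner ℝ ξ₀ p.1.1 : ℝ), p.2) ∈ K} :=
  stmt_5_general ξ₀ δ ε hε F hF K hK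
end
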